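/- Let D ≡ 0 or 3 (mod 4) be a positive integer. The set S := {[4a, b, c] ∈ 𝒬^4_{-D,>0} : |b| ≤ 4·min{a, c}, and if |b| = 4·min{a, c} then b ≥ 0} is a complete system of representatives of 𝒬^4_{-D,>0}/Γ₀(4), i.e. every Γ₀(4)-orbit in 𝒬^4_{-D,>0} contains exactly one element of S. Moreover, every form [4a, b, c] ∈ S satisfies a ≤ (D+1)/8 and c ≤ (D+1)/8. -/
import Mathlib

set_option maxHeartbeats 1000000


/-- Composition of the binary quadratic form `Q = A X² + B XY + C Y²`, stored as the triple
`(A, B, C)`, with an integral matrix `g = (p q; r s)`: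
`(Q ∘ g)(X, Y) := Q(pX + qY, rX + sY)`. -/
def formComp (Q : ℤ × ℤ × ℤ) (g : Matrix (Fin 2) (Fin 2) ℤ) : ℤ × ℤ × ℤ :=
  (Q.1 * g 0 0 ^ 2 + Q.2.1 * g 0 0 * g 1 0 + Q.2.2 * g 1 0 ^ 2,
   2 * Q.1 * g 0 0 * g 0 1 + Q.2.1 * (g 0 0 * g 1 1 + g 0 1 * g 1 0) + 2 * Q.2.2 * g 1 0 * g 1 1,
   Q.1 * g 0 1 ^ 2 + Q.2.1 * g 0 1 * g 1 1 + Q.2.2 * g 1 1 ^ 2)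

/-- The distinguished set of representatives for `𝒬⁴_{-D,>0}/Γ₀(4)`: triples `(a, b, c)`
encoding the form `[4a, b, c]` of discriminant `-D` with `a > 0`, `|b| ≤ 4·min{a,c}`, and
`b ≥ 0` whenever `|b| = 4·min{a,c}`. -/
def S4 (D : ℤ) : Set (ℤ × ℤ × ℤ) :=
  {q | 0 < q.1 ∧ q.2.1 ^ 2 - 16 * q.1 * q.2.2 = -D ∧
    |q.2.1| ≤ 4 * min q.1 q.2.2 ∧ (|q.2.1| = 4 * min q.1 q.2.2 → 0 ≤ q.2.1)}

namespace S4aux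

open Matrix CongruenceSubgroup

lemma formComp_mul (Q : ℤ × ℤ × ℤ) (g h : Matrix (Fin 2) (Fin 2) ℤ) :
    formComp Q (g * h) = formComp (formComp Q g) h := by
  obtain ⟨A, B, C⟩ := Q
  simp only [formComp, Matrix.mul_apply, Fin.sum_univ_two, Prod.mk.injEq]
  refine ⟨by ring, by ring, by ring⟩

lemma formComp_one (Q : ℤ × ℤ × ℤ) : formComp Q 1 = Q := by
  obtain ⟨A, B, C⟩ := Q
  simp [formComp]

lemma formComp_expl (A B C p q r s : ℤ) :
    formComp (A, B, C) !![p, q; r, s] =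
      (A*p^2 + B*p*r + C*r^2, 2*A*p*q + B*(p*s + q*r) + 2*C*r*s, A*q^2 + B*q*s + C*s^2) := by
  simp [formComp]

def γT (n : ℤ) : Matrix.SpecialLinearGroup (Fin 2) ℤ :=
  ⟨!![1, n; 0, 1], by simp [Matrix.det_fin_two_of]⟩

def γU (k : ℤ) : Matrix.SpecialLinearGroup (Fin 2) ℤ :=
  ⟨!![1, 0; 4*k, 1], by simp [Matrix.det_fin_two_of]⟩

lemma γT_mem (n : ℤ) : γT n ∈ Gamma0 4 := by
  rw [Gamma0_mem]; simp [γT]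

lemma γU_mem (k : ℤ) : γU k ∈ Gamma0 4 := by
  rw [Gamma0_mem]; simp [γU]
  have h4 : (4 : ZMod 4) = 0 := by decide
  rw [h4, zero_mul]

lemma stepT (a b c n : ℤ) :
    formComp (4*a, b, c) (γT n).1 = (4*a, b + 8*a*n, 4*a*n^2 + b*n + c) := by
  simp only [γT, formComp, Prod.mk.injEq, Matrix.cons_val', Matrix.cons_val_zero,
    Matrix.cons_val_one, Matrix.head_cons, Matrix.head_fin_const, Matrix.empty_val',
    Matrix.cons_val_fin_one, Matrix.of_apply]
  refine ⟨by ring, by ring, by ring⟩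

lemma stepU (a b c k : ℤ) :
    formComp (4*a, b, c) (γU k).1 = (4*(a + b*k + 4*c*k^2), b + 8*c*k, c) := by
  simp only [γU, formComp, Prod.mk.injEq, Matrix.cons_val', Matrix.cons_val_zero,
    Matrix.cons_val_one, Matrix.head_cons, Matrix.head_fin_const, Matrix.empty_val',
    Matrix.cons_val_fin_one, Matrix.of_apply]
  refine ⟨by ring, by ring, by ring⟩

lemma sq_one_le_of_ne_zero {t : ℤ} (h : t ≠ 0) : 1 ≤ t^2 := by
  nlinarith [Int.one_le_abs h, sq_abs t, abs_nonneg t]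

lemma cpos {D a b c : ℤ} (hD : 0 < D) (ha : 0 < a) (hd : b^2 - 16*a*c = -D) : 0 < c := by
  by_contra h
  push_neg at h
  nlinarith [sq_nonneg b, mul_nonneg ha.le (neg_nonneg.mpr h)]

lemma star1 (a b c x y : ℤ) (ha : 0 < a) (hc : 0 < c) (hba : |b| ≤ 4*a) (hbc : |b| ≤ 4*c)
    (hx : Odd x) (hy : y ≠ 0) : a ≤ a*x^2 + b*x*y + 4*c*y^2 := by
  have hX : 1 ≤ |x| := Int.one_le_abs (by rintro rfl; exact (Int.not_odd_iff_even.mpr Even.zero) hx)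
  have hY : 1 ≤ |y| := Int.one_le_abs hy
  have hx2 : x^2 = |x|^2 := (sq_abs x).symm
  have hy2 : y^2 = |y|^2 := (sq_abs y).symm
  have hbxy : -(|b| * (|x| * |y|)) ≤ b*x*y := by
    have := neg_abs_le (b*x*y)
    rwa [abs_mul, abs_mul, mul_assoc] at this
  have hoddX : Odd |x| := by rcases abs_cases x with ⟨e, _⟩ | ⟨e, _⟩ <;> rw [e] <;>
    [exact hx; exact hx.neg]
  have hsq : 1 ≤ (|x| - 2*|y|)^2 := by
    refine sq_one_le_of_ne_zero ?_
    intro h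
    exact (Int.not_odd_iff_even.mpr ⟨|y|, by linarith⟩) hoddX
  have hX2 : (0:ℤ) ≤ |x|^2 - 1 := by nlinarith
  rcases le_or_gt |x| |y| with h | h
  · nlinarith [mul_nonneg (mul_nonneg (by linarith : (0:ℤ) ≤ 4*c) (by linarith : (0:ℤ) ≤ |y|)) (by linarith : (0:ℤ) ≤ |y| - |x|),
      mul_nonneg (mul_nonneg (abs_nonneg x) (abs_nonneg y)) (by linarith : (0:ℤ) ≤ 4*c - |b|),
      mul_nonneg (le_of_lt ha) hX2]
  · rcases le_or_gt a c with h2 | h2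
    · nlinarith [mul_nonneg (mul_nonneg (abs_nonneg x) (abs_nonneg y)) (by linarith : (0:ℤ) ≤ 4*a - |b|),
        mul_nonneg (by linarith : (0:ℤ) ≤ c - a) (sq_nonneg |y|),
        mul_nonneg (le_of_lt ha) (by linarith : (0:ℤ) ≤ (|x| - 2*|y|)^2 - 1)]
    · nlinarith [mul_nonneg (mul_nonneg (abs_nonneg x) (abs_nonneg y)) (by linarith : (0:ℤ) ≤ 4*c - |b|),
        mul_pos (mul_pos (by linarith : (0:ℤ) < a - c) (by linarith : (0:ℤ) < |y|)) (by linarith : (0:ℤ) < |x| - |y|),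
        mul_nonneg (le_of_lt hc) (by linarith : (0:ℤ) ≤ (|x| - 2*|y|)^2 - 1)]

lemma star2 (a b c x y : ℤ) (ha : 0 < a) (hc : 0 < c) (hba : |b| ≤ 4*a) (hbc : |b| ≤ 4*c)
    (hx : Odd x) (hy : y ≠ 0) (hD : b^2 < 16*a*c)
    (he : a*x^2 + b*x*y + 4*c*y^2 = a) : x^2 = 1 ∧ y^2 = 1 ∧ b*x*y = -4*c := by
  have hX : 1 ≤ |x| := Int.one_le_abs (by rintro rfl; exact (Int.not_odd_iff_even.mpr Even.zero) hx)
  have hY : 1 ≤ |y| := Int.one_le_abs hy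
  have hx2 : x^2 = |x|^2 := (sq_abs x).symm
  have hy2 : y^2 = |y|^2 := (sq_abs y).symm
  have hbxy : -(|b| * (|x| * |y|)) ≤ b*x*y := by
    have := neg_abs_le (b*x*y)
    rwa [abs_mul, abs_mul, mul_assoc] at this
  have hoddX : Odd |x| := by rcases abs_cases x with ⟨e, _⟩ | ⟨e, _⟩ <;> rw [e] <;>
    [exact hx; exact hx.neg]
  have hsq : 1 ≤ (|x| - 2*|y|)^2 := by
    refine sq_one_le_of_ne_zero ?_
    intro h
    exact (Int.not_odd_iff_even.mpr ⟨|y|, by linarith⟩) hoddX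
  have hX2 : (0:ℤ) ≤ |x|^2 - 1 := by nlinarith
  have habs : |b|^2 = b^2 := sq_abs b
  rcases le_or_gt |x| |y| with h | h
  · have t1 : 0 ≤ a * (|x|^2 - 1) := mul_nonneg ha.le hX2
    have t2 : 0 ≤ b*x*y + |b| * (|x| * |y|) := by linarith
    have t3 : 0 ≤ (4*c - |b|) * (|x| * |y|) :=
      mul_nonneg (by linarith) (mul_nonneg (abs_nonneg x) (abs_nonneg y))
    have t4 : 0 ≤ 4 * c * |y| * (|y| - |x|) :=
      mul_nonneg (mul_nonneg (by linarith) (abs_nonneg y)) (by linarith)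
    have hsum : a * (|x|^2 - 1) + (b*x*y + |b| * (|x| * |y|)) + (4*c - |b|) * (|x| * |y|)
        + 4 * c * |y| * (|y| - |x|) = 0 := by linear_combination he - a*hx2 - 4*c*hy2
    have hXone : |x| = 1 := by nlinarith
    have hYone : |y| = 1 := by nlinarith
    have hx1 : x^2 = 1 := by rw [hx2, hXone]; ring
    have hy1 : y^2 = 1 := by rw [hy2, hYone]; ring
    exact ⟨hx1, hy1, by linear_combination he - a*hx1 - 4*c*hy1⟩
  · exfalso
    rcases le_or_gt a c with h2 | h2
    · have t1 : 0 ≤ a * ((|x| - 2*|y|)^2 - 1) := mul_nonneg ha.le (by linarith)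
      have t2 : 0 ≤ b*x*y + |b| * (|x| * |y|) := by linarith
      have t3 : 0 ≤ (4*a - |b|) * (|x| * |y|) :=
        mul_nonneg (by linarith) (mul_nonneg (abs_nonneg x) (abs_nonneg y))
      have t4 : 0 ≤ 4*(c - a)*|y|^2 := mul_nonneg (by linarith) (sq_nonneg _)
      have hsum : a * ((|x| - 2*|y|)^2 - 1) + (b*x*y + |b| * (|x| * |y|)) + (4*a - |b|) * (|x| * |y|)
          + 4*(c - a)*|y|^2 = 0 := by linear_combination he - a*hx2 - 4*c*hy2
      have h3 : (4*a - |b|) * (|x| * |y|) = 0 := by linarith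
      have h4 : (c - a)*|y|^2 = 0 := by linarith
      have hxy1 : 1 ≤ |x| * |y| := by
        have := mul_le_mul hX hY zero_le_one (abs_nonneg x); linarith
      have hb4a : |b| = 4*a := by
        rcases mul_eq_zero.mp h3 with h' | h'
        · linarith
        · linarith
      have hca : c = a := by
        rcases mul_eq_zero.mp h4 with h' | h'
        · linarith
        · nlinarith [sq_nonneg |y|]
      have hbsq : b^2 = 16*a^2 := by rw [← habs, hb4a]; ring
      nlinarith
    · nlinarith [mul_nonneg (mul_nonneg (abs_nonneg x) (abs_nonneg y)) (by linarith : (0:ℤ) ≤ 4*c - |b|),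
        mul_pos (mul_pos (by linarith : (0:ℤ) < a - c) (by linarith : (0:ℤ) < |y|)) (by linarith : (0:ℤ) < |x| - |y|),
        mul_nonneg (le_of_lt hc) (by linarith : (0:ℤ) ≤ (|x| - 2*|y|)^2 - 1)]

lemma uniq (D a b c a' b' c' p q r s : ℤ) (hD : 0 < D)
    (ha : 0 < a) (hd : b^2 - 16*a*c = -D)
    (hr : |b| ≤ 4*min a c) (hbd : |b| = 4*min a c → 0 ≤ b)
    (ha' : 0 < a') (hd' : b'^2 - 16*a'*c' = -D)
    (hr' : |b'| ≤ 4*min a' c') (hbd' : |b'| = 4*min a' c' → 0 ≤ b')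
    (hdet : p*s - q*r = 1) (h4 : (4:ℤ) ∣ r)
    (h1 : 4*a*p^2 + b*p*r + c*r^2 = 4*a')
    (h2 : 2*(4*a)*p*q + b*(p*s + q*r) + 2*c*r*s = b')
    (h3 : 4*a*q^2 + b*q*s + c*s^2 = c') :
    a' = a ∧ b' = b ∧ c' = c := by
  obtain ⟨r', rfl⟩ := h4
  have hc : 0 < c := cpos hD ha hd
  have hc' : 0 < c' := cpos hD ha' hd'
  have hba : |b| ≤ 4*a := le_trans hr (by linarith [min_le_left a c])
  have hbc : |b| ≤ 4*c := le_trans hr (by linarith [min_le_right a c])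
  have hba' : |b'| ≤ 4*a' := le_trans hr' (by linarith [min_le_left a' c'])
  have hbc' : |b'| ≤ 4*c' := le_trans hr' (by linarith [min_le_right a' c'])
  have hodd : Odd (p*s) := ⟨2*(q*r'), by linarith⟩
  have hp : Odd p := (Int.odd_mul.mp hodd).1
  have hs : Odd s := (Int.odd_mul.mp hodd).2
  have e14 : 4*(a*p^2 + b*p*r' + 4*c*r'^2) = 4*a' := by linear_combination h1
  have e1 : a*p^2 + b*p*r' + 4*c*r'^2 = a' := by linarith
  have e2 : 8*a*p*q + b*(p*s + 4*q*r') + 8*c*r'*s = b' := by linear_combination h2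
  have e3 : 4*a*q^2 + b*q*s + c*s^2 = c' := h3
  by_cases hr0 : r' = 0
  · subst hr0
    have hps : p*s = 1 := by linarith
    have hnb : -(4*a) ≤ b := by have := neg_abs_le b; linarith
    rcases Int.mul_eq_one_iff_eq_one_or_neg_one.mp hps with ⟨hp1, hs1⟩ | ⟨hp1, hs1⟩ <;>
        subst hp1 <;> subst hs1
    · have ea : a' = a := by linarith [e1]
      have eb : b' = b + 8*a*q := by linarith [e2]
      have ec : c' = 4*a*q^2 + b*q + c := by linarith [e3]
      have hq0 : q = 0 := by
        rcases lt_trichotomy q 0 with hq | hq | hq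
        · exfalso
          have h8 : 8*a*(q+1) ≤ 0 := mul_nonpos_of_nonneg_of_nonpos (by linarith) (by linarith)
          have hble : b' ≤ -(4*a) := by linarith [le_abs_self b]
          have hnb' : -(4*a') ≤ b' := by have := neg_abs_le b'; linarith
          have hb'eq : b' = -(4*a) := by linarith [ea]
          have habs' : |b'| = 4*a' := by rw [abs_of_neg (by linarith), hb'eq, ea]; ring
          have hmin' : |b'| = 4*min a' c' :=
            le_antisymm hr' (by rw [habs']; linarith [min_le_left a' c'])
          have := hbd' hmin'
          linarith
        · exact hq
        · exfalso
          have h8 : 0 ≤ 8*a*(q-1) := mul_nonneg (by linarith) (by linarith)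
          have hb'ge : 4*a ≤ b' := by linarith
          have hb'le : b' ≤ 4*a := by
            have := le_abs_self b'; linarith [ea]
          have hb'eq : b' = 4*a := by linarith
          have hbeq : b = -(4*a) := by linarith [eb, mul_nonneg (by linarith : (0:ℤ) ≤ 8*a) (by linarith : (0:ℤ) ≤ q - 1)]
          have habsb : |b| = 4*a := by rw [abs_of_neg (by linarith), hbeq]; ring
          have hminb : |b| = 4*min a c :=
            le_antisymm hr (by rw [habsb]; linarith [min_le_left a c])
          have := hbd hminb
          linarith
      subst hq0
      exact ⟨by linarith, by linarith, by linarith⟩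
    · have ea : a' = a := by linarith [e1]
      have eb : b' = b - 8*a*q := by linarith [e2]
      have ec : c' = 4*a*q^2 - b*q + c := by linarith [e3]
      have hq0 : q = 0 := by
        rcases lt_trichotomy q 0 with hq | hq | hq
        · exfalso
          have h8 : 8*a*(q+1) ≤ 0 := mul_nonpos_of_nonneg_of_nonpos (by linarith) (by linarith)
          have hb'ge : 4*a ≤ b' := by linarith
          have hb'le : b' ≤ 4*a := by have := le_abs_self b'; linarith [ea]
          have hb'eq : b' = 4*a := by linarith
          have hbeq : b = -(4*a) := by linarith
          have habsb : |b| = 4*a := by rw [abs_of_neg (by linarith), hbeq]; ring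
          have hminb : |b| = 4*min a c :=
            le_antisymm hr (by rw [habsb]; linarith [min_le_left a c])
          have := hbd hminb
          linarith
        · exact hq
        · exfalso
          have h8 : 0 ≤ 8*a*(q-1) := mul_nonneg (by linarith) (by linarith)
          have hble : b' ≤ -(4*a) := by linarith [le_abs_self b]
          have hnb' : -(4*a') ≤ b' := by have := neg_abs_le b'; linarith
          have hb'eq : b' = -(4*a) := by linarith [ea]
          have habs' : |b'| = 4*a' := by rw [abs_of_neg (by linarith), hb'eq, ea]; ring
          have hmin' : |b'| = 4*min a' c' :=
            le_antisymm hr' (by rw [habs']; linarith [min_le_left a' c'])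
          have := hbd' hmin'
          linarith
      subst hq0
      exact ⟨by linarith, by linarith, by linarith⟩
  · -- r' ≠ 0
    have hdet1 : p*s - 4*q*r' = 1 := by linarith
    have i1 : a'*s^2 - b'*(s*r') + 4*c'*r'^2 = a := by
      rw [← e1, ← e2, ← e3]
      linear_combination (a*(p*s - 4*q*r' + 1))*hdet1
    have haa' : a ≤ a' := by
      have := star1 a b c p r' ha hc hba hbc hp hr0
      linarith [e1]
    have ha'a : a' ≤ a := by
      have h := star1 a' b' c' s (-r') ha' hc' hba' hbc' hs (neg_ne_zero.mpr hr0)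
      nlinarith [i1, h]
    have heqa : a' = a := le_antisymm ha'a haa'
    have hDa : b^2 < 16*a*c := by linarith
    have hDa' : b'^2 < 16*a'*c' := by linarith
    obtain ⟨hp2, hr2, hbe⟩ := star2 a b c p r' ha hc hba hbc hp hr0 hDa
      (by linear_combination e1 + heqa)
    obtain ⟨hs2, hr2', hbe'⟩ := star2 a' b' c' s (-r') ha' hc' hba' hbc' hs
      (neg_ne_zero.mpr hr0) hDa' (by linear_combination i1 - heqa)
    exfalso
    -- from hbe : b*p*r' = -4*c conclude b = 4*c and p*r' = -1
    have hb2 : b^2 = 16*c^2 := by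
      have h := congrArg (fun t => t^2) hbe
      linear_combination h - (b^2*r'^2)*hp2 - (b^2)*hr2
    have hbpos : 0 ≤ b := by
      by_contra hneg
      push_neg at hneg
      have hfac : (-b - 4*c)*(-b + 4*c) = 0 := by linear_combination hb2
      have hbeq : b = -(4*c) := by
        rcases mul_eq_zero.mp hfac with h' | h'
        · linarith
        · linarith
      have habsb : |b| = 4*c := by rw [abs_of_neg hneg, hbeq]; ring
      have hminb : |b| = 4*min a c :=
        le_antisymm hr (by rw [habsb]; linarith [min_le_right a c])
      exact absurd (hbd hminb) (by linarith)
    have hbeq : b = 4*c := by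
      have hfac : (b - 4*c)*(b + 4*c) = 0 := by linear_combination hb2
      rcases mul_eq_zero.mp hfac with h' | h'
      · linarith
      · linarith
    have hpr : p*r' = -1 := by
      have hz : 4*c*(p*r' + 1) = 0 := by linear_combination hbe - (p*r')*hbeq
      rcases mul_eq_zero.mp hz with h' | h'
      · linarith
      · linarith
    -- from hbe' : b'*s*(-r') = -4*c' conclude b' = 4*c' and s*r' = 1
    have hrr : r'^2 = 1 := by linear_combination hr2
    have hbsr : b'*(s*r') = 4*c' := by linear_combination -hbe'
    have hb2' : b'^2 = 16*c'^2 := by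
      have h := congrArg (fun t => t^2) hbsr
      linear_combination h - (b'^2*r'^2)*hs2 - (b'^2)*hrr
    have hbpos' : 0 ≤ b' := by
      by_contra hneg
      push_neg at hneg
      have hfac : (-b' - 4*c')*(-b' + 4*c') = 0 := by linear_combination hb2'
      have hbeq' : b' = -(4*c') := by
        rcases mul_eq_zero.mp hfac with h' | h'
        · linarith
        · linarith
      have habsb : |b'| = 4*c' := by rw [abs_of_neg hneg, hbeq']; ring
      have hminb : |b'| = 4*min a' c' :=
        le_antisymm hr' (by rw [habsb]; linarith [min_le_right a' c'])
      exact absurd (hbd' hminb) (by linarith)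
    have hbeq' : b' = 4*c' := by
      have hfac : (b' - 4*c')*(b' + 4*c') = 0 := by linear_combination hb2'
      rcases mul_eq_zero.mp hfac with h' | h'
      · linarith
      · linarith
    have hsr : s*r' = 1 := by
      have hz : 4*c'*(s*r' - 1) = 0 := by linear_combination hbsr - (s*r')*hbeq'
      rcases mul_eq_zero.mp hz with h' | h'
      · linarith
      · linarith
    have hps : p*s = -1 := by
      linear_combination (s*r')*hpr - hsr - (p*s)*hrr
    have : (4:ℤ) ∣ -2 := ⟨q*r', by linarith⟩
    norm_num at this

lemma bound1 (D a b c : ℤ) (hD : 0 < D) (ha : 0 < a) (hc : 0 < c)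
    (hd : b^2 - 16*a*c = -D) (hr : |b| ≤ 4*min a c) (hbd : |b| = 4*min a c → 0 ≤ b) :
    8*a ≤ D + 1 := by
  have hba : |b| ≤ 4*a := le_trans hr (by linarith [min_le_left a c])
  have hbc : |b| ≤ 4*c := le_trans hr (by linarith [min_le_right a c])
  have habs : |b|^2 = b^2 := sq_abs b
  rcases lt_or_ge c a with h | h
  · -- c < a : use |b| ≤ 4c
    have hb2 : b^2 ≤ 16*c^2 := by nlinarith [abs_nonneg b]
    nlinarith [mul_nonneg (by linarith : (0:ℤ) ≤ c - 1) (by linarith : (0:ℤ) ≤ a - c - 1)]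
  · -- a ≤ c
    rcases lt_or_ge (|b|) (4*a) with h' | h'
    · have hb2 : b^2 ≤ (4*a - 1)^2 := by nlinarith [abs_nonneg b]
      nlinarith [mul_nonneg ha.le (by linarith : (0:ℤ) ≤ c - a)]
    · have habe : |b| = 4*a := le_antisymm hba h'
      have hmin : min a c = a := min_eq_left h
      have hb0 : 0 ≤ b := hbd (by rw [habe, hmin])
      have hbe : b = 4*a := by rw [abs_of_nonneg hb0] at habe; exact habe
      have hca : 0 < c - a := by nlinarith
      nlinarith [mul_nonneg ha.le (by linarith : (0:ℤ) ≤ c - a - 1)]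

lemma reduce (D : ℤ) (hD : 0 < D) : ∀ n : ℕ, ∀ a b c : ℤ, 0 < a → 0 < c → a + c ≤ (n:ℤ) →
    b^2 - 16*a*c = -D →
    ∃ a' b' c' : ℤ, ∃ γ : Matrix.SpecialLinearGroup (Fin 2) ℤ, γ ∈ Gamma0 4 ∧
      formComp (4*a, b, c) γ.1 = (4*a', b', c') ∧
      0 < a' ∧ b'^2 - 16*a'*c' = -D ∧ |b'| ≤ 4*min a' c' ∧ (|b'| = 4*min a' c' → 0 ≤ b') := by
  intro n
  induction n with
  | zero => intro a b c ha hc hn _; exfalso; norm_num at hn; omega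
  | succ n ih =>
    intro a b c ha hc hn hdisc
    push_cast at hn
    by_cases h1 : 4*c < |b|
    · -- U-step : reduce a, keep c
      have h8c : (0:ℤ) < 8*c := by linarith
      set k := (4*c - b) / (8*c) with hk
      have hdm := Int.mul_ediv_add_emod (4*c - b) (8*c)
      have hr0 : 0 ≤ (4*c - b) % (8*c) := Int.emod_nonneg _ (by linarith)
      have hrlt : (4*c - b) % (8*c) < 8*c := Int.emod_lt_of_pos _ h8c
      rw [← hk] at hdm
      have hb2u : b + 8*c*k ≤ 4*c := by linarith
      have hb2l : -(4*c) < b + 8*c*k := by linarith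
      have hd2 : (b + 8*c*k)^2 - 16*(a + b*k + 4*c*k^2)*c = -D := by linear_combination hdisc
      have hb2sq : (b + 8*c*k)^2 ≤ (4*c)^2 := sq_le_sq' (by linarith) hb2u
      have hbsq : (4*c)^2 < b^2 := by
        nlinarith [mul_pos (by linarith : (0:ℤ) < |b| - 4*c)
          (by linarith [abs_nonneg b] : (0:ℤ) < |b| + 4*c), sq_abs b]
      have ha2 : 0 < a + b*k + 4*c*k^2 := by
        by_contra hcon
        push_neg at hcon
        nlinarith [sq_nonneg (b + 8*c*k), mul_nonneg (neg_nonneg.mpr hcon) hc.le]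
      have ha2lt : a + b*k + 4*c*k^2 < a := by
        by_contra hcon
        push_neg at hcon
        nlinarith [mul_nonneg (by linarith : (0:ℤ) ≤ a + b*k + 4*c*k^2 - a) hc.le]
      obtain ⟨a', b', c', γ, hmem, heq, hrest⟩ := ih (a + b*k + 4*c*k^2) (b + 8*c*k) c ha2 hc
        (by have := Int.lt_iff_add_one_le.mp ha2lt; linarith) hd2
      refine ⟨a', b', c', γU k * γ, mul_mem (γU_mem k) hmem, ?_, hrest⟩
      rw [Matrix.SpecialLinearGroup.coe_mul, formComp_mul, stepU]
      exact heq
    · by_cases h2 : 4*a < |b|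
      · -- T-step : reduce c, keep a
        have h8a : (0:ℤ) < 8*a := by linarith
        set k := (4*a - b) / (8*a) with hk
        have hdm := Int.mul_ediv_add_emod (4*a - b) (8*a)
        have hr0 : 0 ≤ (4*a - b) % (8*a) := Int.emod_nonneg _ (by linarith)
        have hrlt : (4*a - b) % (8*a) < 8*a := Int.emod_lt_of_pos _ h8a
        rw [← hk] at hdm
        have hb2u : b + 8*a*k ≤ 4*a := by linarith
        have hb2l : -(4*a) < b + 8*a*k := by linarith
        have hd2 : (b + 8*a*k)^2 - 16*a*(4*a*k^2 + b*k + c) = -D := by linear_combination hdisc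
        have hb2sq : (b + 8*a*k)^2 ≤ (4*a)^2 := sq_le_sq' (by linarith) hb2u
        have hbsq : (4*a)^2 < b^2 := by
          nlinarith [mul_pos (by linarith : (0:ℤ) < |b| - 4*a)
            (by linarith [abs_nonneg b] : (0:ℤ) < |b| + 4*a), sq_abs b]
        have hc2 : 0 < 4*a*k^2 + b*k + c := by
          by_contra hcon
          push_neg at hcon
          nlinarith [sq_nonneg (b + 8*a*k), mul_nonneg (neg_nonneg.mpr hcon) ha.le]
        have hc2lt : 4*a*k^2 + b*k + c < c := by
          by_contra hcon
          push_neg at hcon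
          nlinarith [mul_nonneg (by linarith : (0:ℤ) ≤ 4*a*k^2 + b*k + c - c) ha.le]
        obtain ⟨a', b', c', γ, hmem, heq, hrest⟩ := ih a (b + 8*a*k) (4*a*k^2 + b*k + c) ha hc2
          (by have := Int.lt_iff_add_one_le.mp hc2lt; linarith) hd2
        refine ⟨a', b', c', γT k * γ, mul_mem (γT_mem k) hmem, ?_, hrest⟩
        rw [Matrix.SpecialLinearGroup.coe_mul, formComp_mul, stepT]
        exact heq
      · push_neg at h1 h2
        by_cases hbdr : |b| = 4*min a c ∧ b < 0
        · obtain ⟨hbe, hbneg⟩ := hbdr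
          have hbabs : -b = 4*min a c := by rw [← abs_of_neg hbneg]; exact hbe
          rcases le_total a c with hac | hca
          · -- b = -4a, apply T with n = 1
            have hmin : min a c = a := min_eq_left hac
            have hb : b = -(4*a) := by rw [hmin] at hbabs; linarith
            refine ⟨a, 4*a, c, γT 1, γT_mem 1, ?_, ha, ?_, ?_, ?_⟩
            · rw [stepT, show b + 8*a*1 = 4*a by linarith,
                show 4*a*1^2 + b*1 + c = c by linarith]
            · have : (4*a)^2 = b^2 := by rw [hb]; ring
              linarith [hdisc]
            · rw [hmin, abs_of_nonneg (by linarith : (0:ℤ) ≤ 4*a)]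
            · intro _; linarith
          · -- b = -4c, apply U with k = 1
            have hmin : min a c = c := min_eq_right hca
            have hb : b = -(4*c) := by rw [hmin] at hbabs; linarith
            refine ⟨a, 4*c, c, γU 1, γU_mem 1, ?_, ha, ?_, ?_, ?_⟩
            · rw [stepU, show a + b*1 + 4*c*1^2 = a by linarith,
                show b + 8*c*1 = 4*c by linarith]
            · have : (4*c)^2 = b^2 := by rw [hb]; ring
              linarith [hdisc]
            · rw [hmin, abs_of_nonneg (by linarith : (0:ℤ) ≤ 4*c)]
            · intro _; linarith
        · refine ⟨a, b, c, 1, one_mem _, ?_, ha, hdisc, ?_, ?_⟩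
          · rw [Matrix.SpecialLinearGroup.coe_one, formComp_one]
          · rcases le_total a c with hac | hca
            · rw [min_eq_left hac]; linarith
            · rw [min_eq_right hca]; linarith
          · intro hmin
            by_contra hneg
            push_neg at hneg
            exact hbdr ⟨hmin, hneg⟩

end S4aux

/-- The set `S4 D` is a complete system of representatives of `𝒬⁴_{-D,>0}/Γ₀(4)`: every form
`[4a, b, c]` of discriminant `-D` with `a > 0` is `Γ₀(4)`-equivalent to exactly one member of
`S4 D`.  Moreover every `[4a, b, c] ∈ S4 D` satisfies `a ≤ (D+1)/8` and `c ≤ (D+1)/8`. -/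
theorem S4_complete_repr (D : ℤ) (hD : 0 < D) (hD4 : D % 4 = 0 ∨ D % 4 = 3) :
    (∀ a b c : ℤ, 0 < a → b ^ 2 - 16 * a * c = -D →
      ∃! q : ℤ × ℤ × ℤ, q ∈ S4 D ∧
        ∃ γ : Matrix.SpecialLinearGroup (Fin 2) ℤ, γ ∈ CongruenceSubgroup.Gamma0 4 ∧
          formComp (4 * a, b, c) γ.1 = (4 * q.1, q.2.1, q.2.2)) ∧
    (∀ q ∈ S4 D, 8 * q.1 ≤ D + 1 ∧ 8 * q.2.2 ≤ D + 1) := by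
  constructor
  · intro a b c ha hdisc
    have hc : 0 < c := S4aux.cpos hD ha hdisc
    obtain ⟨a', b', c', γ, hmem, heq, ha', hd', hr', hbd'⟩ :=
      S4aux.reduce D hD (a+c).toNat a b c ha hc (Int.self_le_toNat _) hdisc
    refine ⟨(a', b', c'), ⟨⟨ha', hd', hr', hbd'⟩, γ, hmem, heq⟩, ?_⟩
    rintro ⟨a₂, b₂, c₂⟩ ⟨hmem₂S, γ₂, hmem₂, heq₂⟩
    obtain ⟨ha₂, hd₂, hr₂, hbd₂⟩ := hmem₂S
    have hδmem : γ⁻¹ * γ₂ ∈ CongruenceSubgroup.Gamma0 4 := mul_mem (inv_mem hmem) hmem₂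
    set δ := γ⁻¹ * γ₂ with hδ
    have hγδ : γ * δ = γ₂ := by rw [hδ]; group
    have hδeq : formComp (4*a', b', c') δ.1 = (4*a₂, b₂, c₂) := by
      have h1 : formComp (4*a, b, c) (γ.1 * δ.1) = formComp (4*a', b', c') δ.1 := by
        rw [S4aux.formComp_mul, heq]
      rw [← Matrix.SpecialLinearGroup.coe_mul, hγδ] at h1
      rw [← h1]
      exact heq₂
    have hdet : δ.1 0 0 * δ.1 1 1 - δ.1 0 1 * δ.1 1 0 = 1 := by
      have h := δ.2
      rw [Matrix.det_fin_two] at h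
      exact h
    have h4 : (4:ℤ) ∣ δ.1 1 0 := by
      have h := CongruenceSubgroup.Gamma0_mem.mp hδmem
      have h' := (ZMod.intCast_zmod_eq_zero_iff_dvd (δ.1 1 0) 4).mp h
      exact_mod_cast h'
    have hfc : formComp (4*a', b', c') !![δ.1 0 0, δ.1 0 1; δ.1 1 0, δ.1 1 1]
        = (4*a₂, b₂, c₂) := by
      rw [← Matrix.eta_fin_two δ.1]; exact hδeq
    rw [S4aux.formComp_expl] at hfc
    simp only [Prod.mk.injEq] at hfc
    obtain ⟨u1, u2, u3⟩ := hfc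
    have hd₂' : b₂^2 - 16*a₂*c₂ = -D := hd₂
    have hr₂' : |b₂| ≤ 4*min a₂ c₂ := hr₂
    have hbd₂' : |b₂| = 4*min a₂ c₂ → 0 ≤ b₂ := hbd₂
    obtain ⟨ea, eb, ec⟩ := S4aux.uniq D a' b' c' a₂ b₂ c₂ (δ.1 0 0) (δ.1 0 1) (δ.1 1 0)
      (δ.1 1 1) hD ha' hd' hr' hbd' ha₂ hd₂' hr₂' hbd₂' hdet h4 u1 u2 u3
    rw [ea, eb, ec]
  · rintro ⟨a, b, c⟩ ⟨ha, hd, hr, hbd⟩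
    have hd' : b^2 - 16*a*c = -D := hd
    have hr' : |b| ≤ 4*min a c := hr
    have hbd' : |b| = 4*min a c → 0 ≤ b := hbd
    have hc : 0 < c := S4aux.cpos hD ha hd'
    constructor
    · exact S4aux.bound1 D a b c hD ha hc hd' hr' hbd'
    · refine S4aux.bound1 D c b a hD hc ha ?_ ?_ ?_
      · linear_combination hd'
      · rw [min_comm]; exact hr'
      · rw [min_comm]; exact hbd'
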